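/- For the Bernoulli(p)-mixture scalar source X ~ (1−p)δ₀ + p·Uniform[0,1), the entropy of the b-level quantization satisfies H(⟨X⟩_b) = H₂(q_b) + q_b·log b + o(log b) terms such that lim_{b→∞} H(⟨X⟩_b)/log b = p, where the quantized variable equals 0 with probability (1−p) + p/b. -/

import Mathlib

open Filter MeasureTheory

/-- The law of the Bernoulli(p)-mixture source `X ~ (1−p)·δ₀ + p·Uniform[0,1)`. -/
noncomputable def mixLaw (p : ℝ) : Measure ℝ :=
  ENNReal.ofReal (1 - p) • Measure.dirac 0 +
    ENNReal.ofReal p • volume.restrict (Set.Ico (0 : ℝ) 1)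

/-- Shannon entropy (in bits) of the `b`-level quantization `⟨X⟩_b = ⌊bX⌋/b`
of the mixture source. -/
noncomputable def mixQuantEnt (p : ℝ) (b : ℕ) : ℝ :=
  ∑ j ∈ Finset.range b,
    -((mixLaw p) {x | ⌊(b : ℝ) * x⌋ = (j : ℤ)}).toReal *
      Real.logb 2 (((mixLaw p) {x | ⌊(b : ℝ) * x⌋ = (j : ℤ)}).toReal)

open Real Topology

/-!
The quantization cell `[0, 1/b)` carries mass `q_b = 1 - p + p/b` and each of the other `b - 1`
cells mass `p/b`. Hence, in nats, the entropy is `negMulLog q_b + (b - 1) (p/b) (log b - log p)`.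
Since `q_b → 1 - p` and `negMulLog` is continuous, the first term stays bounded, while the second
is `p log b (1 + o(1))`.
-/

lemma setOf_floor_mul_eq {c : ℝ} (hc : 0 < c) (j : ℤ) :
    {x : ℝ | ⌊c * x⌋ = j} = Set.Ico (j / c) ((j + 1) / c) := by
  ext x
  simp only [Set.mem_ofPred_eq, Set.mem_Ico, Int.floor_eq_iff, div_le_iff₀ hc, lt_div_iff₀ hc,
    mul_comm c x]

lemma mixLaw_apply (p : ℝ) {s : Set ℝ} (hs : MeasurableSet s) :
    mixLaw p s = ENNReal.ofReal (1 - p) * s.indicator 1 0 +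
      ENNReal.ofReal p * volume (s ∩ Set.Ico 0 1) := by
  simp only [mixLaw, Measure.add_apply, Measure.smul_apply, Measure.dirac_apply' _ hs,
    Measure.restrict_apply hs, smul_eq_mul]

lemma mixLaw_floor_cell {p : ℝ} (hp0 : 0 ≤ p) (hp1 : p ≤ 1) {b j : ℕ} (hj : j < b) :
    (mixLaw p {x | ⌊(b : ℝ) * x⌋ = (j : ℤ)}).toReal = (if j = 0 then 1 - p else 0) + p / b := by
  have hb : (0 : ℝ) < b := by exact_mod_cast j.zero_le.trans_lt hj
  have hjb : (j : ℝ) + 1 ≤ b := by exact_mod_cast hj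
  rw [setOf_floor_mul_eq hb, mixLaw_apply p measurableSet_Ico, Int.cast_natCast]
  have hcell : Set.Ico ((j : ℝ) / b) ((j + 1) / b) ⊆ Set.Ico 0 1 :=
    Set.Ico_subset_Ico (by positivity) ((div_le_one hb).2 hjb)
  have hvol : volume (Set.Ico ((j : ℝ) / b) ((j + 1) / b)) = ENNReal.ofReal (1 / b) := by
    rw [Real.volume_Ico, ← sub_div, add_sub_cancel_left]
  have hzero : (0 : ℝ) ∈ Set.Ico ((j : ℝ) / b) ((j + 1) / b) ↔ j = 0 := by
    rcases eq_or_ne j 0 with rfl | hj0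
    · simp [hb]
    · simp only [hj0, iff_false, Set.mem_Ico, not_and_or, not_le]
      exact Or.inl (by positivity)
  rw [Set.inter_eq_left.2 hcell, hvol, ← ENNReal.ofReal_mul hp0, mul_one_div]
  by_cases hj0 : j = 0
  · rw [Set.indicator_of_mem (hzero.2 hj0), if_pos hj0, Pi.one_apply, mul_one,
      ← ENNReal.ofReal_add (by linarith) (by positivity), ENNReal.toReal_ofReal (by positivity)]
  · rw [Set.indicator_of_notMem (mt hzero.1 hj0), if_neg hj0, mul_zero, zero_add,
      zero_add, ENNReal.toReal_ofReal (by positivity)]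

lemma neg_mul_logb (a x : ℝ) : -x * logb a x = negMulLog x / log a := by
  rw [logb, negMulLog, mul_div_assoc]

lemma mixQuantEnt_eq {p : ℝ} (hp0 : 0 ≤ p) (hp1 : p ≤ 1) {b : ℕ} (hb : 0 < b) :
    mixQuantEnt p b = (negMulLog (1 - p + p / b) + (b - 1) * negMulLog (p / b)) / log 2 := by
  obtain ⟨n, rfl⟩ := Nat.exists_eq_add_of_lt hb
  simp only [mixQuantEnt, neg_mul_logb, ← Finset.sum_div]
  rw [Finset.sum_range_succ', mixLaw_floor_cell hp0 hp1 hb, if_pos rfl,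
    Finset.sum_congr rfl fun i hi => by
      rw [mixLaw_floor_cell hp0 hp1 (by simpa using hi), if_neg i.succ_ne_zero, zero_add]]
  simp only [Finset.sum_const, Finset.card_range, nsmul_eq_mul, Nat.cast_add, Nat.cast_one]
  ring

lemma tendsto_inv_log_natCast_atTop : Tendsto (fun b : ℕ => (log b)⁻¹) atTop (𝓝 0) :=
  (tendsto_log_atTop.comp tendsto_natCast_atTop_atTop).inv_tendsto_atTop

lemma tendsto_negMulLog_div_log {u : ℕ → ℝ} {a : ℝ} (hu : Tendsto u atTop (𝓝 a)) :
    Tendsto (fun b : ℕ => negMulLog (u b) / log b) atTop (𝓝 0) := by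
  simpa [div_eq_mul_inv] using
    ((continuous_negMulLog.tendsto a).comp hu).mul tendsto_inv_log_natCast_atTop

lemma tendsto_sub_one_mul_negMulLog_div_log {p : ℝ} (hp : 0 < p) :
    Tendsto (fun b : ℕ => (b - 1) * negMulLog (p / b) / log b) atTop (𝓝 p) := by
  have hlim : Tendsto (fun b : ℕ => (1 - (b : ℝ)⁻¹) * p * (1 - log p * (log b)⁻¹)) atTop
      (𝓝 ((1 - 0) * p * (1 - log p * 0))) :=
    ((tendsto_const_nhds.sub
      (tendsto_inv_atTop_zero.comp tendsto_natCast_atTop_atTop)).mul_const p).mul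
      (tendsto_const_nhds.sub (tendsto_inv_log_natCast_atTop.const_mul _))
  simp only [sub_zero, mul_zero, one_mul, mul_one] at hlim
  refine hlim.congr' ((eventually_gt_atTop 1).mono fun b hb => ?_)
  have hb0 : (b : ℝ) ≠ 0 := by positivity
  have hlogb : log b ≠ 0 := (log_pos (by exact_mod_cast hb)).ne'
  simp only [negMulLog_def, log_div hp.ne' hb0]
  field_simp
  ring

theorem stmt_16 (p : ℝ) (hp0 : 0 < p) (hp1 : p ≤ 1) :
    (∀ b : ℕ, 0 < b →
        ((mixLaw p) {x | ⌊(b : ℝ) * x⌋ = (0 : ℤ)}).toReal = 1 - p + p / b ∧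
        ∀ j : ℕ, 1 ≤ j → j < b →
          ((mixLaw p) {x | ⌊(b : ℝ) * x⌋ = (j : ℤ)}).toReal = p / b) ∧
      Tendsto (fun b : ℕ => mixQuantEnt p b / Real.logb 2 b) atTop (nhds p) := by
  refine ⟨fun b hb => ⟨by simpa using mixLaw_floor_cell hp0.le hp1 hb, fun j hj1 hjb => ?_⟩, ?_⟩
  · simpa [Nat.one_le_iff_ne_zero.1 hj1] using mixLaw_floor_cell hp0.le hp1 hjb
  have hq : Tendsto (fun b : ℕ => 1 - p + p / b) atTop (𝓝 (1 - p)) := by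
    simpa using tendsto_const_nhds.add (tendsto_const_div_atTop_nhds_zero_nat p)
  have hsum := (tendsto_negMulLog_div_log hq).add (tendsto_sub_one_mul_negMulLog_div_log hp0)
  rw [zero_add] at hsum
  refine hsum.congr' ((eventually_gt_atTop 0).mono fun b hb => ?_)
  dsimp only
  rw [eq_comm, mixQuantEnt_eq hp0.le hp1 hb, logb,
    div_div_div_cancel_right₀ (log_pos one_lt_two).ne', add_div]
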